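/- Let Γ(G) be a graph product of nontrivial countable groups over a finite simple graph Γ and let v ∈ V(Γ). Then Γ(G) is canonically isomorphic to the amalgamated free product G₁ *_H G₂, where G₁ = Γ_{S_v ∪ {v}}(G), G₂ = Γ_{V(Γ)∖{v}}(G) and H = Γ_{S_v}(G); that is, the canonical homomorphism from the pushout of the inclusions H ↪ G₁ and H ↪ G₂ to Γ(G) is an isomorphism. -/

import Mathlib

/-!
Every edge of `Γ` either contains `v`, and then lies in the star `{v} ∪ S_v`, or avoids `v`.
Hence each defining commutation relation of `Γ(G)` already holds in `G₁` or in `G₂`. Given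
homomorphisms `k₁`, `k₂` out of `G₁` and `G₂` that agree on `H`, send `G_a` through `k₁` if `a`
is in the star and through `k₂` otherwise; the two choices agree on the overlap `S_v`, so these
vertex homomorphisms satisfy every relation and extend to `Γ(G)`. Uniqueness holds because
`G₁` and `G₂` together contain every vertex group.
-/

open scoped Pointwise ComplexOrder

namespace PPx

universe u v w

/-- The set of commutation relators defining a graph product. -/
def graphProductRels {V : Type u} (Γ : SimpleGraph V) (Gv : V → Type v)
    [∀ a, Group (Gv a)] : Set (Monoid.CoprodI Gv) :=
  {x | ∃ u w : V, Γ.Adj u w ∧ ∃ (g : Gv u) (h : Gv w),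
    x = Monoid.CoprodI.of g * Monoid.CoprodI.of h *
        (Monoid.CoprodI.of g)⁻¹ * (Monoid.CoprodI.of h)⁻¹}

/-- The graph product `Γ(G)` of the family of groups `Gv` over the graph `Γ`. -/
def GraphProduct {V : Type u} (Γ : SimpleGraph V) (Gv : V → Type v)
    [∀ a, Group (Gv a)] : Type (max u v) :=
  Monoid.CoprodI Gv ⧸ Subgroup.normalClosure (graphProductRels Γ Gv)

instance {V : Type u} (Γ : SimpleGraph V) (Gv : V → Type v) [∀ a, Group (Gv a)] :
    Group (GraphProduct Γ Gv) :=
  inferInstanceAs (Group (Monoid.CoprodI Gv ⧸ Subgroup.normalClosure (graphProductRels Γ Gv)))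

/-- The graph distance between two vertices, valued in `ℕ∞` (`⊤` if not connected). -/
noncomputable def graphDist {V : Type u} (Γ : SimpleGraph V) (a b : V) : ℕ∞ :=
  ⨅ p : Γ.Walk a b, (p.length : ℕ∞)

/-- The radius of a graph, `r(Γ) = min_v max_w d(v,w)`, valued in `ℕ∞`. -/
noncomputable def graphRadius {V : Type u} (Γ : SimpleGraph V) : ℕ∞ :=
  ⨅ a : V, ⨆ b : V, graphDist Γ a b


/-- The canonical homomorphism `G_a →* Γ(G)`. -/
def GraphProduct.of {V : Type u} (Γ : SimpleGraph V) (Gv : V → Type v)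
    [∀ a, Group (Gv a)] (a : V) : Gv a →* GraphProduct Γ Gv :=
  (QuotientGroup.mk' (Subgroup.normalClosure (graphProductRels Γ Gv))).comp Monoid.CoprodI.of

/-- For `T ⊆ V(Γ)`, the subgroup `Γ_T(G)` of `Γ(G)` generated by the vertex groups `G_v`
with `v ∈ T`. -/
def GraphProduct.vertexSubgroup {V : Type u} (Γ : SimpleGraph V) (Gv : V → Type v)
    [∀ a, Group (Gv a)] (T : Set V) : Subgroup (GraphProduct Γ Gv) :=
  ⨆ a ∈ T, (GraphProduct.of Γ Gv a).range


/-- `(G, j₁, j₂)` is the amalgamated free product `G₁ *_H G₂` of the injections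
`f₁ : H →* G₁` and `f₂ : H →* G₂`: the square commutes and `G` satisfies the universal
property of the pushout of `f₁` and `f₂`. -/
def IsAmalgamatedProduct {H G₁ G₂ G : Type*} [Group H] [Group G₁] [Group G₂] [Group G]
    (f₁ : H →* G₁) (f₂ : H →* G₂) (j₁ : G₁ →* G) (j₂ : G₂ →* G) : Prop :=
  j₁.comp f₁ = j₂.comp f₂ ∧
  ∀ (K : Type w) (_ : Group K) (k₁ : G₁ →* K) (k₂ : G₂ →* K),
    k₁.comp f₁ = k₂.comp f₂ → ∃! k : G →* K, k.comp j₁ = k₁ ∧ k.comp j₂ = k₂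

namespace GraphProduct

variable {V : Type u} (Γ : SimpleGraph V) (Gv : V → Type v) [∀ a, Group (Gv a)]

theorem range_of_le_vertexSubgroup {T : Set V} {a : V} (ha : a ∈ T) :
    (of Γ Gv a).range ≤ vertexSubgroup Γ Gv T :=
  le_iSup₂ (f := fun a (_ : a ∈ T) => (of Γ Gv a).range) a ha

def into (T : Set V) {a : V} (ha : a ∈ T) : Gv a →* vertexSubgroup Γ Gv T :=
  (Subgroup.inclusion (range_of_le_vertexSubgroup Γ Gv ha)).comp (of Γ Gv a).rangeRestrict

theorem of_commute {a b : V} (hab : Γ.Adj a b) (g : Gv a) (h : Gv b) :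
    Commute (of Γ Gv a g) (of Γ Gv b h) := by
  rw [← commutatorElement_eq_one_iff_commute, commutatorElement_def]
  exact (QuotientGroup.eq_one_iff _).mpr
    (Subgroup.subset_normalClosure ⟨a, b, hab, g, h, rfl⟩)

def lift {K : Type*} [Group K] (φ : ∀ a, Gv a →* K)
    (hφ : ∀ a b, Γ.Adj a b → ∀ (g : Gv a) (h : Gv b), Commute (φ a g) (φ b h)) :
    GraphProduct Γ Gv →* K :=
  QuotientGroup.lift _ (Monoid.CoprodI.lift φ) <| Subgroup.normalClosure_le_normal <| by
    rintro _ ⟨a, b, hab, g, h, rfl⟩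
    simp [MonoidHom.mem_ker, (hφ a b hab g h).eq]

variable {Γ Gv}

@[simp]
theorem subtype_comp_into (T : Set V) {a : V} (ha : a ∈ T) :
    (vertexSubgroup Γ Gv T).subtype.comp (into Γ Gv T ha) = of Γ Gv a :=
  rfl

theorem inclusion_comp_into {S T : Set V} (hST : vertexSubgroup Γ Gv S ≤ vertexSubgroup Γ Gv T)
    {a : V} (haS : a ∈ S) (haT : a ∈ T) :
    (Subgroup.inclusion hST).comp (into Γ Gv S haS) = into Γ Gv T haT :=
  rfl

@[simp]
theorem lift_comp_of {K : Type*} [Group K] (φ : ∀ a, Gv a →* K)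
    (hφ : ∀ a b, Γ.Adj a b → ∀ (g : Gv a) (h : Gv b), Commute (φ a g) (φ b h)) (a : V) :
    (lift Γ Gv φ hφ).comp (of Γ Gv a) = φ a :=
  MonoidHom.ext fun g => Monoid.CoprodI.lift_of φ g

theorem hom_ext {K : Type*} [Group K] {f g : GraphProduct Γ Gv →* K}
    (h : ∀ a, f.comp (of Γ Gv a) = g.comp (of Γ Gv a)) : f = g :=
  QuotientGroup.monoidHom_ext _ (Monoid.CoprodI.ext_hom _ _ h)

theorem vertexSubgroup_hom_ext {K : Type*} [Group K] {T : Set V}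
    {f g : vertexSubgroup Γ Gv T →* K}
    (h : ∀ a (ha : a ∈ T), f.comp (into Γ Gv T ha) = g.comp (into Γ Gv T ha)) : f = g := by
  have hle : vertexSubgroup Γ Gv T ≤ (f.eqLocus g).map (vertexSubgroup Γ Gv T).subtype := by
    refine iSup₂_le fun a ha => ?_
    rintro _ ⟨x, rfl⟩
    exact ⟨into Γ Gv T ha x, DFunLike.congr_fun (h a ha) x, rfl⟩
  ext y
  obtain ⟨z, hz, hzy⟩ := hle y.2
  rwa [← Subtype.ext hzy]

section Amalgam

variable {K : Type*} [Group K] {S T₁ T₂ : Set V}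

theorem hom_ext_of_cover (hcover : ∀ a, a ∈ T₁ ∨ a ∈ T₂) {f g : GraphProduct Γ Gv →* K}
    (hf₁ : f.comp (vertexSubgroup Γ Gv T₁).subtype = g.comp (vertexSubgroup Γ Gv T₁).subtype)
    (hf₂ : f.comp (vertexSubgroup Γ Gv T₂).subtype = g.comp (vertexSubgroup Γ Gv T₂).subtype) :
    f = g := by
  refine hom_ext fun a => ?_
  rcases hcover a with ha | ha
  · rw [← subtype_comp_into T₁ ha, ← MonoidHom.comp_assoc, hf₁, MonoidHom.comp_assoc]
  · rw [← subtype_comp_into T₂ ha, ← MonoidHom.comp_assoc, hf₂, MonoidHom.comp_assoc]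

theorem comp_into_eq_of_mem_inter (h₁ : vertexSubgroup Γ Gv S ≤ vertexSubgroup Γ Gv T₁)
    (h₂ : vertexSubgroup Γ Gv S ≤ vertexSubgroup Γ Gv T₂) (hinter : T₁ ∩ T₂ ⊆ S)
    {k₁ : vertexSubgroup Γ Gv T₁ →* K} {k₂ : vertexSubgroup Γ Gv T₂ →* K}
    (hk : k₁.comp (Subgroup.inclusion h₁) = k₂.comp (Subgroup.inclusion h₂))
    {a : V} (ha₁ : a ∈ T₁) (ha₂ : a ∈ T₂) :
    k₁.comp (into Γ Gv T₁ ha₁) = k₂.comp (into Γ Gv T₂ ha₂) := by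
  have haS : a ∈ S := hinter ⟨ha₁, ha₂⟩
  rw [← inclusion_comp_into h₁ haS, ← inclusion_comp_into h₂ haS, ← MonoidHom.comp_assoc,
    hk, MonoidHom.comp_assoc]

theorem into_commute {T : Set V} {a b : V} (ha : a ∈ T) (hb : b ∈ T) (hab : Γ.Adj a b)
    (g : Gv a) (h : Gv b) : Commute (into Γ Gv T ha g) (into Γ Gv T hb h) :=
  Subtype.ext (of_commute Γ Gv hab g h)

theorem exists_hom_of_cover (h₁ : vertexSubgroup Γ Gv S ≤ vertexSubgroup Γ Gv T₁)
    (h₂ : vertexSubgroup Γ Gv S ≤ vertexSubgroup Γ Gv T₂) (hcover : ∀ a, a ∈ T₁ ∨ a ∈ T₂)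
    (hinter : T₁ ∩ T₂ ⊆ S) (hedge : ∀ a b, Γ.Adj a b → a ∈ T₁ ∧ b ∈ T₁ ∨ a ∈ T₂ ∧ b ∈ T₂)
    {k₁ : vertexSubgroup Γ Gv T₁ →* K} {k₂ : vertexSubgroup Γ Gv T₂ →* K}
    (hk : k₁.comp (Subgroup.inclusion h₁) = k₂.comp (Subgroup.inclusion h₂)) :
    ∃ k : GraphProduct Γ Gv →* K,
      k.comp (vertexSubgroup Γ Gv T₁).subtype = k₁ ∧ k.comp (vertexSubgroup Γ Gv T₂).subtype = k₂ := by
  classical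
  let φ : ∀ a, Gv a →* K := fun a =>
    if ha : a ∈ T₁ then k₁.comp (into Γ Gv T₁ ha)
    else k₂.comp (into Γ Gv T₂ ((hcover a).resolve_left ha))
  have hφ₁ : ∀ a (ha : a ∈ T₁), φ a = k₁.comp (into Γ Gv T₁ ha) := fun a ha => dif_pos ha
  have hφ₂ : ∀ a (ha : a ∈ T₂), φ a = k₂.comp (into Γ Gv T₂ ha) := by
    intro a ha
    by_cases ha₁ : a ∈ T₁
    · exact (dif_pos ha₁).trans (comp_into_eq_of_mem_inter h₁ h₂ hinter hk ha₁ ha)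
    · exact dif_neg ha₁
  have hcomm : ∀ a b, Γ.Adj a b → ∀ (g : Gv a) (h : Gv b), Commute (φ a g) (φ b h) := by
    intro a b hab g h
    rcases hedge a b hab with ⟨ha, hb⟩ | ⟨ha, hb⟩
    · rw [hφ₁ a ha, hφ₁ b hb]
      exact (into_commute ha hb hab g h).map k₁
    · rw [hφ₂ a ha, hφ₂ b hb]
      exact (into_commute ha hb hab g h).map k₂
  refine ⟨lift Γ Gv φ hcomm, vertexSubgroup_hom_ext fun a ha => ?_,
    vertexSubgroup_hom_ext fun a ha => ?_⟩
  · rw [MonoidHom.comp_assoc, subtype_comp_into, lift_comp_of, hφ₁ a ha]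
  · rw [MonoidHom.comp_assoc, subtype_comp_into, lift_comp_of, hφ₂ a ha]

theorem isAmalgamatedProduct_of_cover (h₁ : vertexSubgroup Γ Gv S ≤ vertexSubgroup Γ Gv T₁)
    (h₂ : vertexSubgroup Γ Gv S ≤ vertexSubgroup Γ Gv T₂) (hcover : ∀ a, a ∈ T₁ ∨ a ∈ T₂)
    (hinter : T₁ ∩ T₂ ⊆ S) (hedge : ∀ a b, Γ.Adj a b → a ∈ T₁ ∧ b ∈ T₁ ∨ a ∈ T₂ ∧ b ∈ T₂) :
    IsAmalgamatedProduct (Subgroup.inclusion h₁) (Subgroup.inclusion h₂)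
      (vertexSubgroup Γ Gv T₁).subtype (vertexSubgroup Γ Gv T₂).subtype := by
  refine ⟨by rw [Subgroup.subtype_comp_inclusion, Subgroup.subtype_comp_inclusion],
    fun K _ k₁ k₂ hk => ?_⟩
  obtain ⟨k, hk₁, hk₂⟩ := exists_hom_of_cover h₁ h₂ hcover hinter hedge hk
  exact ⟨k, ⟨hk₁, hk₂⟩, fun k' ⟨hk'₁, hk'₂⟩ =>
    hom_ext_of_cover hcover (hk'₁.trans hk₁.symm) (hk'₂.trans hk₂.symm)⟩

end Amalgam

end GraphProduct

theorem isAmalgamatedProduct_graphProduct_general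
    {V : Type u} (Γ : SimpleGraph V) (Gv : V → Type v)
    [∀ a, Group (Gv a)] (v : V)
    (h₁ : GraphProduct.vertexSubgroup Γ Gv (Γ.neighborSet v) ≤
      GraphProduct.vertexSubgroup Γ Gv (insert v (Γ.neighborSet v)))
    (h₂ : GraphProduct.vertexSubgroup Γ Gv (Γ.neighborSet v) ≤
      GraphProduct.vertexSubgroup Γ Gv {u : V | u ≠ v}) :
    IsAmalgamatedProduct (Subgroup.inclusion h₁) (Subgroup.inclusion h₂)
      (GraphProduct.vertexSubgroup Γ Gv (insert v (Γ.neighborSet v))).subtype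
      (GraphProduct.vertexSubgroup Γ Gv {u : V | u ≠ v}).subtype := by
  refine GraphProduct.isAmalgamatedProduct_of_cover h₁ h₂ (fun a => ?_) ?_ (fun a b hab => ?_)
  · by_cases ha : a = v
    · exact .inl (ha ▸ Set.mem_insert a _)
    · exact .inr ha
  · rintro a ⟨ha₁, ha₂⟩
    exact ha₁.resolve_left ha₂
  · by_cases ha : a = v
    · subst ha
      exact .inl ⟨Set.mem_insert a _, Set.mem_insert_of_mem a hab⟩
    by_cases hb : b = v
    · subst hb
      exact .inl ⟨Set.mem_insert_of_mem b hab.symm, Set.mem_insert b _⟩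
    exact .inr ⟨ha, hb⟩

/-- A graph product decomposes as an amalgamated free product: for a vertex `v`, the
group `Γ(G)` together with the inclusions of `G₁ = Γ_{S_v ∪ {v}}(G)` and
`G₂ = Γ_{V(Γ) ∖ {v}}(G)` is the pushout of the inclusions of `H = Γ_{S_v}(G)` into `G₁`
and `G₂`; equivalently, the canonical homomorphism from the pushout to `Γ(G)` is an
isomorphism. -/
theorem isAmalgamatedProduct_graphProduct
    {V : Type u} [Fintype V] (Γ : SimpleGraph V) (Gv : V → Type v)
    [∀ a, Group (Gv a)] [∀ a, Nontrivial (Gv a)] [∀ a, Countable (Gv a)] (v : V)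
    (h₁ : GraphProduct.vertexSubgroup Γ Gv (Γ.neighborSet v) ≤
      GraphProduct.vertexSubgroup Γ Gv (insert v (Γ.neighborSet v)))
    (h₂ : GraphProduct.vertexSubgroup Γ Gv (Γ.neighborSet v) ≤
      GraphProduct.vertexSubgroup Γ Gv {u : V | u ≠ v}) :
    IsAmalgamatedProduct (Subgroup.inclusion h₁) (Subgroup.inclusion h₂)
      (GraphProduct.vertexSubgroup Γ Gv (insert v (Γ.neighborSet v))).subtype
      (GraphProduct.vertexSubgroup Γ Gv {u : V | u ≠ v}).subtype :=
  isAmalgamatedProduct_graphProduct_general Γ Gv v h₁ h₂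

end PPx
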